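/- arXiv:2105.14623 — 5 statements merged into one kernel-verified Lean document; each statement's English description precedes it below -/
import Mathlib

section
/- Let G and G' be groups, and let A be a group equipped with an action of G × G' by group automorphisms that factors through the projection to G (i.e. (σ,τ)(a) = σ(a) for all σ ∈ G, τ ∈ G', a ∈ A). Suppose ζ : G → A is a cocycle for the induced G-action and γ : G' → A is a group homomorphism such that σ(γ(τ)) = ζ(σ)⁻¹ · γ(τ) · ζ(σ) for all σ ∈ G and τ ∈ G'. Then the map φ : G × G' → A defined by φ((σ,τ)) = ζ(σ) · σ(γ(τ)) is a cocycle. -/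
/-!
The compatibility hypothesis says exactly that `ζ σ * σ (γ τ) = γ τ * ζ σ`, so
`φ (σ, τ) = γ τ * ζ σ`. Since the action factors through `G`, the cocycle identity for `φ`
becomes that of `ζ` multiplied on the left by `γ τ₁ * γ τ₂`, once `σ₁ (γ τ₂)` has been moved
past `ζ σ₁` by the same commutation rule.
-/

/-- Converse construction: from a cocycle `ζ : G → A` for the induced
`G`-action and a homomorphism `γ : G' →* A` whose image satisfies
`σ (γ τ) = (ζ σ)⁻¹ * γ τ * ζ σ`, the map `φ (σ, τ) = ζ σ * σ (γ τ)` is a cocycle on `G × G'`. -/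
theorem stmt1 (G G' A : Type*) [Group G] [Group G'] [Group A]
    [MulDistribMulAction (G × G') A]
    (hfac : ∀ (σ : G) (τ : G') (a : A), (σ, τ) • a = ((σ, (1 : G')) : G × G') • a)
    (ζ : G → A)
    (hζ : ∀ σ₁ σ₂ : G, ζ (σ₁ * σ₂) = ζ σ₁ * ((σ₁, (1 : G')) : G × G') • ζ σ₂)
    (γ : G' →* A)
    (hcomm : ∀ (σ : G) (τ : G'),
      ((σ, (1 : G')) : G × G') • γ τ = (ζ σ)⁻¹ * γ τ * ζ σ)
    (φ : G × G' → A)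
    (hφ : ∀ (σ : G) (τ : G'), φ (σ, τ) = ζ σ * ((σ, (1 : G')) : G × G') • γ τ) :
    ∀ g h : G × G', φ (g * h) = φ g * g • φ h := by
  have hζγ (σ : G) (τ : G') : ζ σ * ((σ, (1 : G')) : G × G') • γ τ = γ τ * ζ σ :=
    eq_inv_mul_iff_mul_eq.mp ((hcomm σ τ).trans (mul_assoc _ _ _))
  have hφ' (σ : G) (τ : G') : φ (σ, τ) = γ τ * ζ σ := (hφ σ τ).trans (hζγ σ τ)
  rintro ⟨σ₁, τ₁⟩ ⟨σ₂, τ₂⟩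
  calc φ ((σ₁, τ₁) * (σ₂, τ₂))
      = γ τ₁ * γ τ₂ * (ζ σ₁ * ((σ₁, (1 : G')) : G × G') • ζ σ₂) := by
        rw [Prod.mk_mul_mk, hφ', map_mul, hζ]
    _ = γ τ₁ * (ζ σ₁ * ((σ₁, (1 : G')) : G × G') • γ τ₂)
          * ((σ₁, (1 : G')) : G × G') • ζ σ₂ := by
        rw [hζγ]
        group
    _ = φ (σ₁, τ₁) * (σ₁, τ₁) • φ (σ₂, τ₂) := by
        rw [hφ', hφ', hfac σ₁ τ₁, smul_mul']
        group
end

section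
/- Let α be a nonzero rational number. There is a unique ℚ-algebra automorphism σ of the field ℚ(t) of rational functions in one variable over ℚ satisfying σ(t) = α/t, and the fixed field {f ∈ ℚ(t) : σ(f) = f} is exactly the subfield ℚ(t + α/t) generated over ℚ by t + α/t. -/
/-!
Since `α/t` is transcendental and generates `ℚ(t)`, `t ↦ α/t` extends to an automorphism `σ`,
and it is an involution other than the identity. By Artin's theorem `ℚ(t)` has degree
`|⟨σ⟩| = 2` over the fixed field of `σ`. That field contains `π = t + α/t`, and `t` is a root
of `T² - πT + α` over `ℚ(π)`, so `[ℚ(t) : ℚ(π)] ≤ 2` forces the two fields to coincide.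
-/

open Polynomial IntermediateField

theorem IntermediateField.mem_fixedField_zpowers_iff {F E : Type*} [Field F] [Field E]
    [Algebra F E] (σ : E ≃ₐ[F] E) (x : E) :
    x ∈ fixedField (Subgroup.zpowers σ) ↔ σ x = x := by
  simp only [mem_fixedField_iff, Subgroup.forall_mem_zpowers]
  exact MulAction.mem_fixedBy_zpowers_iff_mem_fixedBy (G := E ≃ₐ[F] E) (α := E)

theorem IntermediateField.eq_fixedField_of_le_of_finrank_le {F E : Type*} [Field F] [Field E]
    [Algebra F E] {H : Subgroup (E ≃ₐ[F] E)} [Finite H] {L : IntermediateField F E}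
    [FiniteDimensional L E] (hle : L ≤ fixedField H) (hfin : Module.finrank L E ≤ Nat.card H) :
    L = fixedField H := by
  have := Fintype.ofFinite H
  refine eq_of_le_of_finrank_le' hle (hfin.trans ?_)
  rw [Nat.card_eq_fintype_card]
  exact (FixedPoints.finrank_eq_card H E).ge

namespace RatFunc

variable {K : Type*} [Field K]

theorem algHom_ext {L : Type*} [Field L] [Algebra K L] {f g : K⟮X⟯ →ₐ[K] L} (h : f X = g X) :
    f = g := by
  have hpoly : f.comp (IsScalarTower.toAlgHom K K[X] K⟮X⟯) =
      g.comp (IsScalarTower.toAlgHom K K[X] K⟮X⟯) :=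
    Polynomial.algHom_ext (by simpa using h)
  exact AlgHom.coe_ringHom_injective <| IsFractionRing.ringHom_ext (A := K[X])
    fun p => congr($hpoly p)

theorem intDegree_C_div_X {α : K} (hα : α ≠ 0) : intDegree (C α / X : K⟮X⟯) = -1 := by
  rw [div_eq_mul_inv, intDegree_mul (by simpa using hα) (inv_ne_zero X_ne_zero), intDegree_inv,
    intDegree_C, intDegree_X]
  rfl

theorem transcendental_C_div_X {α : K} (hα : α ≠ 0) : Transcendental K (C α / X : K⟮X⟯) :=
  transcendental_of_ne_C _ fun ⟨c, hc⟩ => by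
    simpa [hc, intDegree_C] using intDegree_C_div_X hα

theorem C_div_X_ne_X {α : K} (hα : α ≠ 0) : (C α / X : K⟮X⟯) ≠ X := fun h => by
  simpa [h, intDegree_X] using intDegree_C_div_X hα

theorem C_div_C_div_X {α : K} (hα : α ≠ 0) : C α / (C α / X : K⟮X⟯) = X :=
  div_div_cancel₀ (by simpa using hα)

theorem adjoin_C_div_X {α : K} (hα : α ≠ 0) : K⟮(C α / X : K⟮X⟯)⟯ = ⊤ := by
  rw [eq_top_iff, ← adjoin_X, adjoin_simple_le_iff]
  convert (K⟮(C α / X : K⟮X⟯)⟯).div_mem (IntermediateField.algebraMap_mem _ α)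
    (mem_adjoin_simple_self K _) using 1
  rw [algebraMap_eq_C, C_div_C_div_X hα]

noncomputable def inversionAlgEquiv {α : K} (hα : α ≠ 0) : K⟮X⟯ ≃ₐ[K] K⟮X⟯ :=
  (algEquivOfTranscendental _ (transcendental_C_div_X hα)).trans
    ((equivOfEq (adjoin_C_div_X hα)).trans topEquiv)

@[simp]
theorem inversionAlgEquiv_X {α : K} (hα : α ≠ 0) : inversionAlgEquiv hα X = C α / X := by
  simp [inversionAlgEquiv]

theorem existsUnique_algEquiv_apply_X_eq_C_div_X {α : K} (hα : α ≠ 0) :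
    ∃! σ : K⟮X⟯ ≃ₐ[K] K⟮X⟯, σ X = C α / X :=
  ⟨inversionAlgEquiv hα, inversionAlgEquiv_X hα, fun _ hτ =>
    AlgEquiv.coe_toAlgHom_injective (algHom_ext (by simpa using hτ))⟩

section

variable {α : K} (hα : α ≠ 0) {σ : K⟮X⟯ ≃ₐ[K] K⟮X⟯} (hσ : σ X = C α / X)
include hα hσ

theorem apply_C_div_X_of_apply_X_eq_C_div_X : σ (C α / X) = X := by
  rw [map_div₀, hσ, ← algebraMap_eq_C, AlgEquiv.commutes, algebraMap_eq_C, C_div_C_div_X hα]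

theorem orderOf_eq_two_of_apply_X_eq_C_div_X : orderOf σ = 2 := by
  refine orderOf_eq_prime ?_ fun h => C_div_X_ne_X hα (by simpa [h] using hσ.symm)
  refine AlgEquiv.coe_toAlgHom_injective (algHom_ext ?_)
  change σ (σ X) = X
  rw [hσ, apply_C_div_X_of_apply_X_eq_C_div_X hα hσ]

end

theorem exists_monic_quadratic_aeval_X_eq_zero (α : K) :
    ∃ p : K⟮X + C α / X⟯[X], p.Monic ∧ p.natDegree = 2 ∧ aeval (X : K⟮X⟯) p = 0 := by
  refine ⟨Polynomial.X ^ 2 - Polynomial.C (AdjoinSimple.gen K (X + C α / X)) * Polynomial.X +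
    Polynomial.C (algebraMap K _ α), by monicity!, by compute_degree!, ?_⟩
  have hX : (X : K⟮X⟯) ≠ 0 := X_ne_zero
  simp only [map_add, map_sub, map_mul, map_pow, aeval_X, aeval_C, AdjoinSimple.algebraMap_gen,
    ← IsScalarTower.algebraMap_apply, algebraMap_eq_C]
  field_simp
  ring

theorem finiteDimensional_adjoin_X_add_C_div_X (α : K) :
    FiniteDimensional K⟮X + C α / X⟯ K⟮X⟯ :=
  have ⟨p, hp, _, hpX⟩ := exists_monic_quadratic_aeval_X_eq_zero α
  have := adjoin.finiteDimensional ⟨p, hp, hpX⟩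
  (IntermediateField.adjoinXEquiv _).toLinearEquiv.finiteDimensional

theorem finrank_adjoin_X_add_C_div_X_le (α : K) :
    Module.finrank K⟮X + C α / X⟯ K⟮X⟯ ≤ 2 := by
  obtain ⟨p, hp, hdeg, hpX⟩ := exists_monic_quadratic_aeval_X_eq_zero α
  rw [← (IntermediateField.adjoinXEquiv _).toLinearEquiv.finrank_eq,
    adjoin.finrank ⟨p, hp, hpX⟩, ← hdeg]
  exact natDegree_le_natDegree (minpoly.min _ _ hp hpX)

theorem adjoin_X_add_C_div_X_eq_fixedField {α : K} (hα : α ≠ 0) {σ : K⟮X⟯ ≃ₐ[K] K⟮X⟯}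
    (hσ : σ X = C α / X) : K⟮X + C α / X⟯ = fixedField (Subgroup.zpowers σ) := by
  have hcard : Nat.card (Subgroup.zpowers σ) = 2 := by
    rw [Nat.card_zpowers, orderOf_eq_two_of_apply_X_eq_C_div_X hα hσ]
  have : Finite (Subgroup.zpowers σ) := Nat.finite_of_card_ne_zero (by simp [hcard])
  have := finiteDimensional_adjoin_X_add_C_div_X α
  refine eq_fixedField_of_le_of_finrank_le (adjoin_simple_le_iff.2 ?_) ?_
  · rw [mem_fixedField_zpowers_iff, map_add, hσ, apply_C_div_X_of_apply_X_eq_C_div_X hα hσ,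
      add_comm]
  · exact hcard ▸ finrank_adjoin_X_add_C_div_X_le α

theorem setOf_apply_eq_self_eq_adjoin_X_add_C_div_X {α : K} (hα : α ≠ 0)
    {σ : K⟮X⟯ ≃ₐ[K] K⟮X⟯} (hσ : σ X = C α / X) :
    {f | σ f = f} = (K⟮X + C α / X⟯ : Set K⟮X⟯) := by
  ext f
  rw [SetLike.mem_coe, adjoin_X_add_C_div_X_eq_fixedField hα hσ, mem_fixedField_zpowers_iff]
  rfl

end RatFunc

/-- For a nonzero rational `α`, there is a unique `ℚ`-algebra
automorphism `σ` of `ℚ(t)` with `σ t = α / t`, and its fixed field is exactly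
`ℚ(t + α/t)`. -/
theorem stmt4 (α : ℚ) (hα : α ≠ 0) :
    (∃! σ : RatFunc ℚ ≃ₐ[ℚ] RatFunc ℚ, σ RatFunc.X = RatFunc.C α / RatFunc.X) ∧
    (∀ σ : RatFunc ℚ ≃ₐ[ℚ] RatFunc ℚ, σ RatFunc.X = RatFunc.C α / RatFunc.X →
      {f : RatFunc ℚ | σ f = f} =
        (IntermediateField.adjoin ℚ
            {(RatFunc.X : RatFunc ℚ) + RatFunc.C α / RatFunc.X} :
          Set (RatFunc ℚ))) := by
  have h := And.intro (RatFunc.existsUnique_algEquiv_apply_X_eq_C_div_X hα)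
    fun σ hσ => RatFunc.setOf_apply_eq_self_eq_adjoin_X_add_C_div_X hα (σ := σ) hσ
  -- The statement is elaborated with `DivisionRing.toRatAlgebra`, the lemmas with the
  -- `RatFunc` algebra instance; they agree because `Algebra ℚ _` is a subsingleton.
  rwa [Subsingleton.elim (RatFunc.instAlgebraOfPolynomial ℚ ℚ) DivisionRing.toRatAlgebra] at h
end

section
/- (Hilbert 90 for GL_n.) Let K be a finite Galois extension of ℚ with Galois group G = Gal(K/ℚ), acting entrywise on matrices over K. If ψ : G → GL_n(K) satisfies the cocycle condition ψ(στ) = ψ(σ) · σ(ψ(τ)) for all σ, τ ∈ G, then there exists a matrix A ∈ GL_n(K) such that ψ(σ) = A⁻¹ · σ(A) for every σ ∈ G. -/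
/-!
For `v ∈ Kⁿ` let `Q v = ∑_σ ψ(σ) σ(v)` (`cocycleAverage ψ v`). The cocycle identity gives
`ψ(τ) τ(Q v) = Q v`, and Dedekind's independence of characters shows that the vectors `Q v`
span `Kⁿ`. Choosing `n` of them that are linearly independent as the columns of `B` gives an
invertible `B` with `ψ(σ) σ(B) = B`, so `A = B⁻¹` splits the cocycle.
-/

open Matrix

theorem exists_linearIndependent_comp_of_span_range_eq_top {K V α ι : Type*} [Field K]
    [AddCommGroup V] [Module K V] [FiniteDimensional K V] [Fintype ι]
    {g : α → V} (hg : Submodule.span K (Set.range g) = ⊤)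
    (hι : Fintype.card ι = Module.finrank K V) :
    ∃ m : ι → α, LinearIndependent K (g ∘ m) := by
  obtain ⟨s, hs_range, hs_span, hs_li⟩ := exists_linearIndependent K (Set.range g)
  let b : Module.Basis s K V := .mk hs_li (by rw [Subtype.range_coe, hs_span, hg])
  have : Finite s := Module.Finite.finite_basis b
  obtain ⟨e⟩ : Nonempty (ι ≃ s) := by
    rw [← Nat.card_eq_fintype_card, Module.finrank_eq_nat_card_basis b] at hι
    exact Finite.card_eq.mp hι
  choose m hm using fun i => hs_range (e i).2
  refine ⟨m, ?_⟩
  convert hs_li.comp e e.injective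
  exact funext hm

theorem AlgEquiv.linearIndependent_coeFn (F K : Type*) [Field F] [Field K] [Algebra F K] :
    LinearIndependent K (fun σ : K ≃ₐ[F] K => (σ : K → K)) :=
  (linearIndependent_monoidHom K K).comp (fun σ : K ≃ₐ[F] K => (σ : K →* K))
    fun _ _ h => AlgEquiv.ext fun a => DFunLike.congr_fun h a

section CocycleAverage

variable {F K ι : Type*} [Field F] [Field K] [Algebra F K] [FiniteDimensional F K]
  [Fintype ι]

noncomputable def cocycleAverage (ψ : (K ≃ₐ[F] K) → Matrix ι ι K) (v : ι → K) : ι → K :=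
  ∑ σ, ψ σ *ᵥ (σ ∘ v)

theorem cocycleAverage_single [DecidableEq ι] (ψ : (K ≃ₐ[F] K) → Matrix ι ι K) (j : ι) (c : K) :
    cocycleAverage ψ (Pi.single j c) = ∑ σ, σ c • (ψ σ).col j := by
  refine Finset.sum_congr rfl fun σ _ => ?_
  have : σ ∘ Pi.single j c = Pi.single j (σ c) :=
    funext (Pi.apply_single (fun _ => σ) (fun _ => map_zero σ) j c)
  rw [this, mulVec_single, op_smul_eq_smul]

theorem mulVec_comp_cocycleAverage {ψ : (K ≃ₐ[F] K) → Matrix ι ι K}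
    (hψ : ∀ σ τ, ψ (σ * τ) = ψ σ * (ψ τ).map σ) (τ : K ≃ₐ[F] K) (v : ι → K) :
    ψ τ *ᵥ (τ ∘ cocycleAverage ψ v) = cocycleAverage ψ v := by
  have hterm : ∀ σ,
      ψ τ *ᵥ (τ ∘ (ψ σ *ᵥ (σ ∘ v))) = ψ (τ * σ) *ᵥ ((τ * σ : K ≃ₐ[F] K) ∘ v) := by
    intro σ
    have : τ ∘ (ψ σ *ᵥ (σ ∘ v)) = (ψ σ).map τ *ᵥ ((τ * σ : K ≃ₐ[F] K) ∘ v) :=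
      funext (RingHom.map_mulVec (τ : K →+* K) (ψ σ) (σ ∘ v))
    rw [this, mulVec_mulVec, hψ]
  have hcomp : τ ∘ cocycleAverage ψ v = ∑ σ, τ ∘ (ψ σ *ᵥ (σ ∘ v)) := by
    ext i
    simp [cocycleAverage]
  rw [hcomp, mulVec_sum]
  simp_rw [hterm]
  exact Fintype.sum_equiv (Equiv.mulLeft τ) _ _ fun _ => rfl

theorem span_range_cocycleAverage [DecidableEq ι] {ψ : (K ≃ₐ[F] K) → Matrix ι ι K}
    (hψ₁ : IsUnit (ψ 1)) : Submodule.span K (Set.range (cocycleAverage ψ)) = ⊤ := by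
  by_contra hne
  obtain ⟨f, hf_ne, hf⟩ :=
    Submodule.exists_dual_map_eq_bot_of_lt_top (lt_top_iff_ne_top.2 hne) inferInstance
  have hfQ : ∀ v, f (cocycleAverage ψ v) = 0 := fun v =>
    (Submodule.mem_bot K).1 (hf ▸ Submodule.mem_map_of_mem (Submodule.subset_span ⟨v, rfl⟩))
  -- `∑_σ f(ψ(σ) e_j) σ(c) = f(cocycleAverage ψ (c e_j)) = 0` for every `c`; apply Dedekind.
  have hf_col : ∀ j σ, f ((ψ σ).col j) = 0 := by
    intro j
    refine Fintype.linearIndependent_iff.1 (AlgEquiv.linearIndependent_coeFn F K) _ ?_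
    funext c
    simpa [cocycleAverage_single, mul_comm] using hfQ (Pi.single j c)
  refine hf_ne (LinearMap.ext fun w => ?_)
  obtain ⟨v, rfl⟩ := mulVec_surjective_iff_isUnit.2 hψ₁ w
  have : f ∘ₗ (ψ 1).mulVecLin = 0 :=
    LinearMap.pi_ext' fun j => LinearMap.ext_ring (by simp [hf_col])
  exact LinearMap.congr_fun this v

theorem exists_isUnit_forall_mul_map_eq [DecidableEq ι] {ψ : (K ≃ₐ[F] K) → Matrix ι ι K}
    (hψ : ∀ σ τ, ψ (σ * τ) = ψ σ * (ψ τ).map σ) (hψ₁ : IsUnit (ψ 1)) :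
    ∃ B : Matrix ι ι K, IsUnit B ∧ ∀ σ, ψ σ * B.map σ = B := by
  obtain ⟨m, hm⟩ := exists_linearIndependent_comp_of_span_range_eq_top
    (span_range_cocycleAverage hψ₁) (Module.finrank_fintype_fun_eq_card K).symm
  refine ⟨.of fun i j => cocycleAverage ψ (m j) i, linearIndependent_cols_iff_isUnit.1 hm,
    fun σ => ?_⟩
  ext i j
  exact congr_fun (mulVec_comp_cocycleAverage hψ σ (m j)) i

end CocycleAverage

theorem stmt12_general (K : Type*) [Field K] [Algebra ℚ K] [FiniteDimensional ℚ K]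
    (n : ℕ)
    (ψ : (K ≃ₐ[ℚ] K) → Matrix.GeneralLinearGroup (Fin n) K)
    (hψ : ∀ σ τ : K ≃ₐ[ℚ] K, (ψ (σ * τ)).val = (ψ σ).val * ((ψ τ).val.map ⇑σ)) :
    ∃ A : Matrix.GeneralLinearGroup (Fin n) K,
      ∀ σ : K ≃ₐ[ℚ] K, (ψ σ).val = (A⁻¹).val * (A.val.map ⇑σ) := by
  obtain ⟨B, hB, hBψ⟩ :=
    exists_isUnit_forall_mul_map_eq (ψ := fun σ => (ψ σ).val) hψ (ψ 1).isUnit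
  refine ⟨hB.unit⁻¹, fun σ => ?_⟩
  have hmap : B.map σ * (B⁻¹).map σ = 1 :=
    calc B.map σ * (B⁻¹).map σ = (σ : K →+* K).mapMatrix (B * B⁻¹) :=
          (map_mul (σ : K →+* K).mapMatrix B B⁻¹).symm
      _ = 1 := by rw [mul_nonsing_inv B ((isUnit_iff_isUnit_det B).1 hB), map_one]
  calc (ψ σ).val = (ψ σ).val * B.map σ * (B⁻¹).map σ := by rw [mul_assoc, hmap, mul_one]
    _ = _ := by rw [hBψ, inv_inv, coe_units_inv, IsUnit.unit_spec]

/-- **Hilbert 90 for `GLₙ`.** If `K/ℚ` is a finite Galois extension and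
`ψ : Gal(K/ℚ) → GLₙ(K)` satisfies the cocycle condition `ψ(στ) = ψ(σ) σ(ψ(τ))`, then
there is `A ∈ GLₙ(K)` with `ψ(σ) = A⁻¹ σ(A)` for every `σ`. -/
theorem stmt12 (K : Type*) [Field K] [Algebra ℚ K] [FiniteDimensional ℚ K]
    [IsGalois ℚ K] (n : ℕ)
    (ψ : (K ≃ₐ[ℚ] K) → Matrix.GeneralLinearGroup (Fin n) K)
    (hψ : ∀ σ τ : K ≃ₐ[ℚ] K, (ψ (σ * τ)).val = (ψ σ).val * ((ψ τ).val.map ⇑σ)) :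
    ∃ A : Matrix.GeneralLinearGroup (Fin n) K,
      ∀ σ : K ≃ₐ[ℚ] K, (ψ σ).val = (A⁻¹).val * (A.val.map ⇑σ) :=
  stmt12_general K n ψ hψ
end

section
/- Let d and e be squarefree integers with d ≡ 1 (mod 4) and e ≡ 1 (mod 4). If rational numbers x, y, z satisfy d·x² + y² + e·z² = 0, then x = y = z = 0. In other words, the conic d·X² + Y² + e·Z² = 0 in ℙ²_ℚ has no rational points. -/
/-!
Over `ℤ/4` the hypotheses `d ≡ e ≡ 1` turn the conic into `X² + Y² + Z² = 0`, and since squares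
are `0` or `1` mod 4, an integer solution has all coordinates even. Halving gives another
solution, so every coordinate is divisible by every power of `2` and hence vanishes. Clearing
denominators reduces the rational case to the integral one.
-/

lemma two_dvd_of_mul_sq_add_sq_add_mul_sq_eq_zero {d e a b c : ℤ} (hd4 : d % 4 = 1)
    (he4 : e % 4 = 1) (h : d * a ^ 2 + b ^ 2 + e * c ^ 2 = 0) : 2 ∣ a ∧ 2 ∣ b ∧ 2 ∣ c := by
  let π : ZMod 4 →+* ZMod 2 := ZMod.castHom (by norm_num) (ZMod 2)
  have hsq : ∀ u v w : ZMod 4, u ^ 2 + v ^ 2 + w ^ 2 = 0 → π u = 0 ∧ π v = 0 ∧ π w = 0 := by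
    decide
  have hmod4 : (a : ZMod 4) ^ 2 + (b : ZMod 4) ^ 2 + (c : ZMod 4) ^ 2 = 0 := by
    have hd : (d : ZMod 4) = 1 := by simpa [hd4] using (ZMod.intCast_mod d 4).symm
    have he : (e : ZMod 4) = 1 := by simpa [he4] using (ZMod.intCast_mod e 4).symm
    have := congrArg (Int.cast : ℤ → ZMod 4) h
    push_cast [hd, he] at this
    simpa only [one_mul] using this
  obtain ⟨ha, hb, hc⟩ := hsq _ _ _ hmod4
  simp only [π, map_intCast] at ha hb hc
  exact ⟨(ZMod.intCast_zmod_eq_zero_iff_dvd a 2).mp ha,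
    (ZMod.intCast_zmod_eq_zero_iff_dvd b 2).mp hb, (ZMod.intCast_zmod_eq_zero_iff_dvd c 2).mp hc⟩

lemma two_pow_dvd_of_mul_sq_add_sq_add_mul_sq_eq_zero {d e : ℤ} (hd4 : d % 4 = 1)
    (he4 : e % 4 = 1) (k : ℕ) :
    ∀ {a b c : ℤ}, d * a ^ 2 + b ^ 2 + e * c ^ 2 = 0 → 2 ^ k ∣ a ∧ 2 ^ k ∣ b ∧ 2 ^ k ∣ c := by
  induction k with
  | zero => simp
  | succ k ih =>
    intro a b c h
    obtain ⟨⟨a, rfl⟩, ⟨b, rfl⟩, ⟨c, rfl⟩⟩ := two_dvd_of_mul_sq_add_sq_add_mul_sq_eq_zero hd4 he4 h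
    have h' : d * a ^ 2 + b ^ 2 + e * c ^ 2 = 0 := by linarith
    obtain ⟨ha, hb, hc⟩ := ih h'
    simp only [pow_succ']
    exact ⟨mul_dvd_mul_left 2 ha, mul_dvd_mul_left 2 hb, mul_dvd_mul_left 2 hc⟩

lemma Int.eq_zero_of_forall_two_pow_dvd {a : ℤ} (h : ∀ k : ℕ, 2 ^ k ∣ a) : a = 0 :=
  Int.eq_zero_of_dvd_of_natAbs_lt_natAbs (h a.natAbs) <| by
    rw [Int.natAbs_pow]
    exact Nat.lt_two_pow_self

lemma eq_zero_of_mul_sq_add_sq_add_mul_sq_eq_zero {d e a b c : ℤ} (hd4 : d % 4 = 1)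
    (he4 : e % 4 = 1) (h : d * a ^ 2 + b ^ 2 + e * c ^ 2 = 0) : a = 0 ∧ b = 0 ∧ c = 0 :=
  have hdvd k := two_pow_dvd_of_mul_sq_add_sq_add_mul_sq_eq_zero hd4 he4 k h
  ⟨Int.eq_zero_of_forall_two_pow_dvd fun k ↦ (hdvd k).1,
    Int.eq_zero_of_forall_two_pow_dvd fun k ↦ (hdvd k).2.1,
    Int.eq_zero_of_forall_two_pow_dvd fun k ↦ (hdvd k).2.2⟩

lemma Rat.exists_mul_eq_intCast_of_den_dvd (x : ℚ) {n : ℤ} (h : (x.den : ℤ) ∣ n) :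
    ∃ a : ℤ, n * x = a := by
  obtain ⟨k, rfl⟩ := h
  exact ⟨x.num * k, by push_cast; rw [← Rat.mul_den_eq_num]; ring⟩

theorem stmt13_general (d e : ℤ)
    (hd4 : d % 4 = 1) (he4 : e % 4 = 1) (x y z : ℚ)
    (h : (d : ℚ) * x ^ 2 + y ^ 2 + (e : ℚ) * z ^ 2 = 0) :
    x = 0 ∧ y = 0 ∧ z = 0 := by
  set n : ℤ := x.den * y.den * z.den
  have hn : (n : ℚ) ≠ 0 := by positivity
  obtain ⟨a, ha⟩ := x.exists_mul_eq_intCast_of_den_dvd (n := n) ⟨y.den * z.den, by ring⟩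
  obtain ⟨b, hb⟩ := y.exists_mul_eq_intCast_of_den_dvd (n := n) ⟨x.den * z.den, by ring⟩
  obtain ⟨c, hc⟩ := z.exists_mul_eq_intCast_of_den_dvd (n := n) ⟨x.den * y.den, by ring⟩
  have hint : d * a ^ 2 + b ^ 2 + e * c ^ 2 = 0 := by
    have : (d : ℚ) * a ^ 2 + b ^ 2 + e * c ^ 2 = 0 := by
      rw [← ha, ← hb, ← hc]
      linear_combination (n : ℚ) ^ 2 * h
    exact_mod_cast this
  obtain ⟨rfl, rfl, rfl⟩ := eq_zero_of_mul_sq_add_sq_add_mul_sq_eq_zero hd4 he4 hint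
  simp only [Int.cast_zero, mul_eq_zero, hn, false_or] at ha hb hc
  exact ⟨ha, hb, hc⟩

/-- For squarefree integers `d ≡ 1 (mod 4)` and `e ≡ 1 (mod 4)`, the
conic `d X² + Y² + e Z² = 0` has no nontrivial rational points. -/
theorem stmt13 (d e : ℤ) (hd : Squarefree d) (he : Squarefree e)
    (hd4 : d % 4 = 1) (he4 : e % 4 = 1) (x y z : ℚ)
    (h : (d : ℚ) * x ^ 2 + y ^ 2 + (e : ℚ) * z ^ 2 = 0) :
    x = 0 ∧ y = 0 ∧ z = 0 :=
  stmt13_general d e hd4 he4 x y z h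
end

section
/- Let N and M be positive integers such that N divides M, every prime dividing M also divides N, and either N is odd or 4 divides N. Then the kernel of the natural reduction homomorphism (ℤ/Mℤ)ˣ → (ℤ/Nℤ)ˣ on unit groups is a cyclic group. -/
/-!
Write `M = N * K`. Since `M` and `N` have the same prime factors, `φ M = K * φ N`, so the
kernel has order `K`. The residue `1 + N` lies in the kernel, and lifting the exponent gives
`v_p ((1 + N) ^ k - 1) = v_p N + v_p k` for every prime `p ∣ N` (for `p = 2` this is where
`4 ∣ N` is needed). Hence `(1 + N) ^ k ≡ 1 [MOD N * K]` exactly when `K ∣ k`: the residue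
`1 + N` has order `K` and generates the kernel.
-/

open scoped Nat

theorem Nat.totient_mul_of_primeFactors_subset {m n : ℕ} (h : n.primeFactors ⊆ m.primeFactors) :
    φ (m * n) = n * φ m := by
  rcases eq_or_ne m 0 with rfl | hm
  · simp
  rcases eq_or_ne n 0 with rfl | hn
  · simp
  rw [totient_eq_div_primeFactors_mul, totient_eq_div_primeFactors_mul m,
    primeFactors_mul hm hn, Finset.union_eq_left.mpr h, mul_comm m,
    Nat.mul_div_assoc _ (prod_primeFactors_dvd m), mul_assoc]

theorem Nat.emultiplicity_one_add_pow_sub_one {p a : ℕ} (hp : p.Prime) (hpa : p ∣ a)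
    (h4 : p = 2 → 4 ∣ a) (k : ℕ) :
    emultiplicity p ((1 + a) ^ k - 1) = emultiplicity p a + emultiplicity p k := by
  have hp1a : ¬p ∣ 1 + a := fun h => hp.not_dvd_one ((Nat.dvd_add_left hpa).mp h)
  rcases eq_or_ne p 2 with rfl | hp2
  · have h1 : 1 ≤ (1 + a) ^ k := Nat.one_le_pow _ _ (by omega)
    rw [← Int.natCast_emultiplicity, ← Int.natCast_emultiplicity, ← Int.natCast_emultiplicity,
      Nat.cast_sub h1]
    push_cast
    simpa using Int.two_pow_sub_pow' (x := 1 + a) (y := 1) k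
      (by simpa using Int.natCast_dvd_natCast.mpr (h4 rfl)) (by exact_mod_cast hp1a)
  · simpa using Nat.emultiplicity_pow_sub_pow hp (hp.odd_of_ne_two hp2) (x := 1 + a) (y := 1)
      (by simpa using hpa) hp1a k

theorem Nat.mul_dvd_one_add_pow_sub_one_iff {N K : ℕ} (hN : N ≠ 0) (hK : K ≠ 0)
    (hKN : K.primeFactors ⊆ N.primeFactors) (hN4 : Odd N ∨ 4 ∣ N) (k : ℕ) :
    N * K ∣ (1 + N) ^ k - 1 ↔ K ∣ k := by
  have h4 : 2 ∣ N → 4 ∣ N := fun h2 =>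
    hN4.resolve_left (Nat.not_odd_iff_even.mpr (even_iff_two_dvd.mpr h2))
  rw [UniqueFactorizationMonoid.dvd_iff_emultiplicity_le (mul_ne_zero hN hK),
    UniqueFactorizationMonoid.dvd_iff_emultiplicity_le hK]
  refine forall_congr' fun p => imp_congr_right fun hp => ?_
  have hp' : p.Prime := Nat.prime_iff.mpr hp
  rw [emultiplicity_mul hp]
  by_cases hpN : p ∣ N
  · rw [emultiplicity_one_add_pow_sub_one hp' hpN (by rintro rfl; exact h4 hpN)]
    exact ENat.add_le_add_iff_left (finiteMultiplicity_iff_emultiplicity_ne_top.mp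
      (Nat.finiteMultiplicity_iff.mpr ⟨hp'.ne_one, Nat.pos_of_ne_zero hN⟩))
  · have hpK : ¬p ∣ K := fun h => hpN (Nat.dvd_of_mem_primeFactors
      (hKN (Nat.mem_primeFactors.mpr ⟨hp', h, hK⟩)))
    simp [emultiplicity_eq_zero.mpr hpN, emultiplicity_eq_zero.mpr hpK]

namespace ZMod

theorem card_ker_unitsMap_mul_totient {m n : ℕ} [NeZero m] (h : n ∣ m) :
    Nat.card (unitsMap h).ker * φ n = φ m := by
  have : NeZero n := ⟨ne_zero_of_dvd_ne_zero (NeZero.ne m) h⟩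
  rw [← card_units_eq_totient, ← card_units_eq_totient, ← Nat.card_eq_fintype_card,
    ← Nat.card_eq_fintype_card, ← (unitsMap h).ker.card_mul_index, Subgroup.index_ker,
    MonoidHom.range_eq_top_of_surjective _ (unitsMap_surjective h), Subgroup.card_top]

theorem orderOf_one_add_natCast {N K : ℕ} (hN : N ≠ 0) (hK : K ≠ 0)
    (hKN : K.primeFactors ⊆ N.primeFactors) (hN4 : Odd N ∨ 4 ∣ N) :
    orderOf (1 + N : ZMod (N * K)) = K := by
  refine Nat.dvd_right_iff_eq.mp fun k => ?_
  rw [orderOf_dvd_iff_pow_eq_one, ← Nat.mul_dvd_one_add_pow_sub_one_iff hN hK hKN hN4,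
    ← Nat.modEq_iff_dvd' (Nat.one_le_pow _ _ (by omega)), ← natCast_eq_natCast_iff]
  push_cast
  exact eq_comm

end ZMod

/-- Let `N ∣ M` be positive integers such that every prime dividing
`M` divides `N`, and `N` is odd or divisible by `4`.  Then the kernel of the reduction
map `(ℤ/Mℤ)ˣ → (ℤ/Nℤ)ˣ` is cyclic. -/
theorem stmt15 (N M : ℕ) (hN : 0 < N) (hM : 0 < M) (hdvd : N ∣ M)
    (hprimes : ∀ p : ℕ, p.Prime → p ∣ M → p ∣ N)
    (hN4 : Odd N ∨ 4 ∣ N) :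
    IsCyclic (MonoidHom.ker (Units.map (ZMod.castHom hdvd (ZMod N)).toMonoidHom)) := by
  obtain ⟨K, rfl⟩ := hdvd
  change IsCyclic (ZMod.unitsMap (dvd_mul_right N K)).ker
  have hK : K ≠ 0 := right_ne_zero_of_mul hM.ne'
  have : NeZero (N * K) := ⟨hM.ne'⟩
  have hKN : K.primeFactors ⊆ N.primeFactors := fun p hpK =>
    have ⟨hp, hpK, _⟩ := Nat.mem_primeFactors.mp hpK
    Nat.mem_primeFactors.mpr ⟨hp, hprimes p hp (hpK.mul_left N), hN.ne'⟩
  have hcard : Nat.card (ZMod.unitsMap (dvd_mul_right N K)).ker = K := by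
    have := ZMod.card_ker_unitsMap_mul_totient (dvd_mul_right N K)
    rw [Nat.totient_mul_of_primeFactors_subset hKN] at this
    exact Nat.eq_of_mul_eq_mul_right (Nat.totient_pos.mpr hN) this
  have hord := ZMod.orderOf_one_add_natCast hN.ne' hK hKN hN4
  have hunit : IsUnit (1 + N : ZMod (N * K)) :=
    (orderOf_pos_iff.mp (by rw [hord]; exact Nat.pos_of_ne_zero hK)).isUnit
  have hmem : hunit.unit ∈ (ZMod.unitsMap (dvd_mul_right N K)).ker :=
    Units.ext <| by simp [ZMod.unitsMap_val]
  refine isCyclic_of_orderOf_eq_card ⟨hunit.unit, hmem⟩ ?_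
  rw [Subgroup.orderOf_mk, ← orderOf_units, hunit.unit_spec, hord, hcard]
end
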